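/- arXiv:1811.09477 — 2 statements merged into one kernel-verified Lean document; each statement's English description precedes it below -/
import Mathlib

section
/- For a = 0 and b ∈ C_i^{(h,q^m)} (0 ≤ i ≤ h−1), the codeword c(0,b) of C_K has Hamming weight (2nq^{m_1−1}(q−1)/(q^m−1))·(q^m − 1 − h·η_i^{(h,q^m)}), where η_i^{(h,q^m)} is the Gaussian period of order h over F_{q^m}. -/
open scoped Classical

/-- The codeword `c(a,b)` of the code `C_K` with `K = F_{q^{m_1}} × D`,
`D = {ω^{hi} : 0 ≤ i < n}`:
`c(a,b) = (Tr^{m_1}_1(ax)+Tr^m_1(by) | Tr^{m_1}_1(ax)+Tr^m_1((a+b)y))_{(x,y) ∈ K}`,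
indexed by `(x, i, half) ∈ E1 × Fin n × Bool` where `y = ω^{hi}`. -/
noncomputable def cword (Kq E1 E : Type*) [Field Kq] [Field E1] [Field E]
    [Algebra Kq E1] [Algebra Kq E] [Algebra E1 E]
    (ω : E) (h n : ℕ) (a : E1) (b : E) : E1 × Fin n × Bool → Kq :=
  fun z =>
    if z.2.2 then
      Algebra.trace Kq E1 (a * z.1) + Algebra.trace Kq E (b * ω ^ (h * (z.2.1 : ℕ)))
    else
      Algebra.trace Kq E1 (a * z.1) +
        Algebra.trace Kq E ((algebraMap E1 E a + b) * ω ^ (h * (z.2.1 : ℕ)))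

/-- The canonical additive character of a finite field of characteristic `p`. -/
noncomputable def canChar (p : ℕ) (F : Type*) [Field F] [Fintype F] [Algebra (ZMod p) F]
    (x : F) : ℂ :=
  Complex.exp (2 * Real.pi * Complex.I * ((Algebra.trace (ZMod p) F x).val : ℂ) / p)

/-- Gaussian period `η_i^{(N,q^m)}` of order `N` w.r.t. primitive element `α`. -/
noncomputable def gaussPeriod (p : ℕ) (F : Type*) [Field F] [Fintype F]
    [Algebra (ZMod p) F] (α : F) (N i : ℕ) : ℂ :=
  ∑ x : F, if ∃ k : ℕ, x = α ^ i * (α ^ N) ^ k then canChar p F x else 0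

/-!
With `a = 0` both halves of `c(0,b)` read `Tr(b g^j)` with `g = ω^h`, so the weight is `2 q^{m₁}`
times the number of `j < n` with `Tr(b g^j) ≠ 0`. The element `g` is a primitive `e(q-1)`-th root
of unity, `e = (q^m-1)/(h(q-1))`; hence `g^e ∈ F_q^*`, which makes that condition `e`-periodic, and
`F_q^* ⊆ ⟨g⟩`, which makes the coset `b⟨g⟩` stable under `F_q^*`. Summing `ψ(c x)` over `c ∈ F_q`
and `x ∈ b⟨g⟩` in both orders (orthogonality of `ψ` on one side, invariance of the Gaussian period
under `F_q^*` on the other) gives `q · #{x ∈ b⟨g⟩ | Tr x ≠ 0} = (q - 1)(#b⟨g⟩ - η_i)`.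
-/

open Finset

lemma Function.Periodic.count_mul {p : ℕ → Prop} [DecidablePred p] {e : ℕ}
    (hp : Function.Periodic p e) (k : ℕ) : Nat.count p (k * e) = k * Nat.count p e := by
  induction k with
  | zero => simp
  | succ k ih =>
    rw [add_one_mul, add_comm, Nat.count_add', ih]
    have hshift : (fun j => p (j + k * e)) = p := funext (hp.nat_mul k)
    simp only [hshift]
    ring

lemma Nat.count_eq_card_filter_fin (p : ℕ → Prop) [DecidablePred p] (n : ℕ) :
    Nat.count p n = #{i : Fin n | p i} := by
  rw [Nat.count_eq_card_filter_range, card_filter, card_filter,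
    Fin.sum_univ_eq_sum_range (fun i => if p i then 1 else 0)]

lemma Nat.mul_div_mul_mul_eq {M h r : ℕ} (hr : r ∣ M) (hh : h ∣ M / r) :
    h * (M / (h * r) * r) = M := by
  obtain ⟨N, rfl⟩ := hr
  rcases Nat.eq_zero_or_pos r with rfl | hr0
  · simp
  rw [Nat.mul_div_cancel_left N hr0] at hh
  obtain ⟨e, rfl⟩ := hh
  rcases Nat.eq_zero_or_pos h with rfl | hh0
  · simp
  rw [show r * (h * e) = h * r * e by ring, Nat.mul_div_cancel_left e (Nat.mul_pos hh0 hr0)]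
  ring

section Monoid

variable {M : Type*} [Monoid M]

lemma exists_eq_mul_pow_mul_pow_iff {g : M} (hg : IsOfFinOrder g) (a x : M) (k₀ : ℕ) :
    (∃ k : ℕ, x = a * g ^ k₀ * g ^ k) ↔ ∃ k : ℕ, x = a * g ^ k := by
  constructor
  · rintro ⟨k, rfl⟩
    exact ⟨k₀ + k, by rw [pow_add, mul_assoc]⟩
  · rintro ⟨k, rfl⟩
    obtain ⟨d, hd⟩ : ∃ d, orderOf g = d + 1 := Nat.exists_eq_add_one.mpr hg.orderOf_pos
    -- `g ^ (d * k₀)` inverts `g ^ k₀`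
    refine ⟨d * k₀ + k, ?_⟩
    rw [mul_assoc, ← pow_add, show k₀ + (d * k₀ + k) = (d + 1) * k₀ + k by ring, pow_add,
      pow_mul, ← hd, pow_orderOf_eq_one, one_pow, one_mul]

lemma filter_exists_eq_mul_pow_eq_image [Fintype M] [DecidableEq M] {g : M}
    (hg : IsOfFinOrder g) (b : M) :
    univ.filter (fun x => ∃ k : ℕ, x = b * g ^ k) =
      (range (orderOf g)).image (fun j => b * g ^ j) := by
  ext x
  simp only [mem_filter, mem_univ, true_and, mem_image, mem_range]
  constructor
  · rintro ⟨k, rfl⟩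
    exact ⟨k % orderOf g, Nat.mod_lt _ hg.orderOf_pos, by rw [pow_mod_orderOf]⟩
  · rintro ⟨j, -, rfl⟩
    exact ⟨j, rfl⟩

end Monoid

lemma card_filter_exists_eq_mul_pow {L : Type*} [Field L] [Fintype L] {g : L} {d : ℕ}
    (hg : IsPrimitiveRoot g d) (hd : d ≠ 0) {a : L} (ha : a ≠ 0) (k₀ : ℕ) (p : L → Prop)
    [DecidablePred p] :
    #((univ.filter fun x => ∃ k : ℕ, x = a * g ^ k).filter p) =
      Nat.count (fun j => p (a * g ^ k₀ * g ^ j)) d := by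
  have hfin := hg.isOfFinOrder hd
  have hb : a * g ^ k₀ ≠ 0 := mul_ne_zero ha (pow_ne_zero _ (hg.ne_zero hd))
  have hinj : Set.InjOn (fun j => a * g ^ k₀ * g ^ j) (range (orderOf g)) :=
    fun i hi j hj hij => pow_injOn_Iio_orderOf (by simpa using hi) (by simpa using hj)
      (mul_left_cancel₀ hb hij)
  rw [← filter_congr fun x _ => exists_eq_mul_pow_mul_pow_iff hfin a x k₀,
    filter_exists_eq_mul_pow_eq_image hfin, filter_image,
    card_image_of_injOn (hinj.mono (filter_subset _ _)), ← Nat.count_eq_card_filter_range,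
    ← hg.eq_orderOf]

section LinearFunctional

variable {K L : Type*} [Fintype K] [DecidableEq K]

lemma sum_addChar_linearMap_smul [CommRing K] [AddCommGroup L] [Module K L]
    {ψ : AddChar K ℂ} (hψ : ψ.IsPrimitive) (f : L →ₗ[K] K) (z : L) :
    ∑ c : K, ψ (f (c • z)) = if f z = 0 then (Fintype.card K : ℂ) else 0 := by
  simp_rw [map_smul, smul_eq_mul]
  rw [AddChar.sum_mulShift _ hψ, Nat.cast_ite, Nat.cast_zero]

lemma card_mul_card_filter_ne_zero [Field K] [AddCommGroup L] [Module K L]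
    {ψ : AddChar K ℂ} (hψ : ψ.IsPrimitive) (f : L →ₗ[K] K) {C : Finset L}
    (hC : ∀ c : K, c ≠ 0 → ∀ x ∈ C, c • x ∈ C) :
    (Fintype.card K : ℂ) * #(C.filter fun x => f x ≠ 0) =
      (Fintype.card K - 1) * (#C - ∑ x ∈ C, ψ (f x)) := by
  have hsum_smul (c : K) (hc : c ≠ 0) : ∑ x ∈ C, ψ (f (c • x)) = ∑ x ∈ C, ψ (f x) :=
    sum_nbij' (c • ·) (c⁻¹ • ·) (hC c hc) (hC c⁻¹ (inv_ne_zero hc))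
      (fun x _ => inv_smul_smul₀ hc x) (fun x _ => smul_inv_smul₀ hc x) (fun _ _ => rfl)
  have hdouble :=
    sum_comm (s := C) (t := (univ : Finset K)) (f := fun x c => ψ (f (c • x)))
  simp only [sum_addChar_linearMap_smul hψ] at hdouble
  rw [← add_sum_erase _ _ (mem_univ 0),
    sum_congr rfl fun c hc => hsum_smul c (ne_of_mem_erase hc)] at hdouble
  simp only [sum_ite, sum_const, mul_zero, add_zero, zero_smul, map_zero,
    AddChar.map_zero_eq_one, card_erase_of_mem (mem_univ _), card_univ, nsmul_eq_mul,
    mul_one] at hdouble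
  have hsplit : (#(C.filter fun x => f x = 0) + #(C.filter fun x => f x ≠ 0) : ℂ) = #C := by
    exact_mod_cast card_filter_add_card_filter_not (s := C) (fun x => f x = 0)
  rw [Nat.cast_pred Fintype.card_pos] at hdouble
  linear_combination (Fintype.card K : ℂ) * hsplit - hdouble

end LinearFunctional

section FiniteField

variable {K L : Type*} [Field K] [Fintype K] [Field L] [Algebra K L]

lemma exists_algebraMap_eq_of_pow_card_sub_one_eq_one {x : L}
    (hx : x ^ (Fintype.card K - 1) = 1) : ∃ c : K, algebraMap K L c = x := by
  have hq : 0 < Fintype.card K - 1 := Nat.sub_pos_of_lt Fintype.one_lt_card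
  have hsub : (univ.erase 0).image (algebraMap K L) ⊆
      Polynomial.nthRootsFinset (Fintype.card K - 1) (1 : L) := by
    intro y hy
    obtain ⟨c, hc, rfl⟩ := mem_image.mp hy
    rw [Polynomial.mem_nthRootsFinset hq, ← map_pow,
      FiniteField.pow_card_sub_one_eq_one c (ne_of_mem_erase hc), map_one]
  have heq := eq_of_subset_of_card_le hsub <| by
    rw [card_image_of_injective _ (algebraMap K L).injective, card_erase_of_mem (mem_univ _),
      card_univ]
    exact (Multiset.toFinset_card_le _).trans (Polynomial.card_nthRoots _ _)
  obtain ⟨c, -, hc⟩ := mem_image.mp (heq ▸ (Polynomial.mem_nthRootsFinset hq 1).mpr hx)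
  exact ⟨c, hc⟩

variable {g : L} {e : ℕ}

lemma exists_algebraMap_eq_pow (hg : IsPrimitiveRoot g (e * (Fintype.card K - 1))) :
    ∃ u : K, u ≠ 0 ∧ algebraMap K L u = g ^ e := by
  have hge : (g ^ e) ^ (Fintype.card K - 1) = 1 := by rw [← pow_mul, hg.pow_eq_one]
  obtain ⟨u, hu⟩ := exists_algebraMap_eq_of_pow_card_sub_one_eq_one hge
  refine ⟨u, fun hu0 => ?_, hu⟩
  rw [← hu, hu0, map_zero, zero_pow (Nat.sub_pos_of_lt Fintype.one_lt_card).ne'] at hge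
  exact zero_ne_one hge

lemma periodic_trace_mul_pow_ne_zero (hg : IsPrimitiveRoot g (e * (Fintype.card K - 1)))
    (b : L) : Function.Periodic (fun j => Algebra.trace K L (b * g ^ j) ≠ 0) e := by
  obtain ⟨u, hu0, hu⟩ := exists_algebraMap_eq_pow hg
  intro j
  have hshift : b * g ^ (j + e) = u • (b * g ^ j) := by
    rw [Algebra.smul_def, hu, pow_add]
    ring
  simp only [hshift, map_smul, smul_eq_mul, ne_eq, mul_eq_zero, hu0, false_or]

lemma exists_smul_eq_mul_pow (hg : IsPrimitiveRoot g (e * (Fintype.card K - 1))) (he : e ≠ 0)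
    {c : K} (hc : c ≠ 0) {a x : L} (hx : ∃ k : ℕ, x = a * g ^ k) :
    ∃ k : ℕ, c • x = a * g ^ k := by
  have : NeZero (e * (Fintype.card K - 1)) :=
    ⟨mul_ne_zero he (Nat.sub_pos_of_lt Fintype.one_lt_card).ne'⟩
  obtain ⟨s, -, hs⟩ := hg.eq_pow_of_pow_eq_one (ξ := algebraMap K L c) <| by
    rw [mul_comm, pow_mul, ← map_pow, FiniteField.pow_card_sub_one_eq_one c hc, map_one, one_pow]
  obtain ⟨k, rfl⟩ := hx
  exact ⟨s + k, by rw [Algebra.smul_def, ← hs, pow_add]; ring⟩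

theorem card_mul_count_trace_ne_zero_period [DecidableEq K] [Fintype L] {ψ : AddChar K ℂ}
    (hψ : ψ.IsPrimitive) (hg : IsPrimitiveRoot g (e * (Fintype.card K - 1))) (he : e ≠ 0)
    {a : L} (ha : a ≠ 0) (k₀ : ℕ) :
    (Fintype.card K : ℂ) * Nat.count (fun j => Algebra.trace K L (a * g ^ k₀ * g ^ j) ≠ 0) e =
      e * (Fintype.card K - 1) -
        ∑ x ∈ univ.filter (fun x => ∃ k : ℕ, x = a * g ^ k), ψ (Algebra.trace K L x) := by
  have hd : e * (Fintype.card K - 1) ≠ 0 :=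
    mul_ne_zero he (Nat.sub_pos_of_lt Fintype.one_lt_card).ne'
  have hkey := card_mul_card_filter_ne_zero hψ (Algebra.trace K L)
    (C := univ.filter fun x => ∃ k : ℕ, x = a * g ^ k) fun c hc x hx => by
      simp only [mem_filter, mem_univ, true_and] at hx ⊢
      exact exists_smul_eq_mul_pow hg he hc hx
  have hcard : #(univ.filter fun x => ∃ k : ℕ, x = a * g ^ k) = e * (Fintype.card K - 1) := by
    simpa using card_filter_exists_eq_mul_pow hg hd ha k₀ (fun _ => True)
  rw [hcard, card_filter_exists_eq_mul_pow hg hd ha k₀, mul_comm e,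
    (periodic_trace_mul_pow_ne_zero hg _).count_mul] at hkey
  push_cast [Nat.cast_pred Fintype.card_pos] at hkey
  have hq1 : (Fintype.card K : ℂ) - 1 ≠ 0 :=
    sub_ne_zero.mpr (by exact_mod_cast Fintype.one_lt_card.ne')
  exact mul_left_cancel₀ hq1 (by linear_combination hkey)

theorem card_mul_count_trace_ne_zero [DecidableEq K] [Fintype L] {ψ : AddChar K ℂ}
    (hψ : ψ.IsPrimitive) (hg : IsPrimitiveRoot g (e * (Fintype.card K - 1))) (he : e ≠ 0)
    {a : L} (ha : a ≠ 0) (k₀ : ℕ) {n : ℕ} (hn : e ∣ n) :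
    (Fintype.card K : ℂ) * Nat.count (fun j => Algebra.trace K L (a * g ^ k₀ * g ^ j) ≠ 0) n =
      (n / e : ℕ) * (e * (Fintype.card K - 1) -
        ∑ x ∈ univ.filter (fun x => ∃ k : ℕ, x = a * g ^ k), ψ (Algebra.trace K L x)) := by
  obtain ⟨t, rfl⟩ := hn
  rw [Nat.mul_div_cancel_left t (Nat.pos_of_ne_zero he), mul_comm e t,
    (periodic_trace_mul_pow_ne_zero hg _).count_mul, ←
    card_mul_count_trace_ne_zero_period hψ hg he ha k₀]
  push_cast
  ring

end FiniteField

lemma isPrimitiveRoot_card_sub_one_of_forall_eq_pow {L : Type*} [Field L] [Fintype L]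
    (hL : 2 < Fintype.card L) {ω : L} (hω : ∀ x : L, x ≠ 0 → ∃ k : ℕ, x = ω ^ k) :
    IsPrimitiveRoot ω (Fintype.card L - 1) := by
  have hω0 : ω ≠ 0 := by
    rintro rfl
    have hsub : (univ : Finset L) ⊆ {0, 1} := fun x _ => by
      rcases eq_or_ne x 0 with rfl | hx
      · simp
      obtain ⟨k, rfl⟩ := hω x hx
      rcases k with _ | k <;> simp
    have := (card_le_card hsub).trans card_le_two
    rw [card_univ] at this
    omega
  have hgen : ∀ x : Lˣ, x ∈ Subgroup.zpowers (Units.mk0 ω hω0) := fun x => by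
    obtain ⟨k, hk⟩ := hω x x.ne_zero
    exact ⟨k, Units.ext (by simp [hk])⟩
  rw [← Fintype.card_units, ← Nat.card_eq_fintype_card,
    ← orderOf_eq_card_of_forall_mem_zpowers hgen, ← orderOf_units]
  exact IsPrimitiveRoot.orderOf _

section CanonicalCharacter

variable (p : ℕ) (F : Type*) [Field F] [Algebra (ZMod p) F]

noncomputable def canAddChar [NeZero p] : AddChar F ℂ :=
  ZMod.stdAddChar.compAddMonoidHom (Algebra.trace (ZMod p) F).toAddMonoidHom

lemma canChar_eq_canAddChar [NeZero p] [Fintype F] (x : F) :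
    canChar p F x = canAddChar p F x := by
  rw [canAddChar, AddChar.compAddMonoidHom_apply, ZMod.stdAddChar_apply, ZMod.toCircle_apply]
  rfl

lemma isPrimitive_canAddChar [Fact p.Prime] [Fintype F] : (canAddChar p F).IsPrimitive := by
  refine AddChar.IsPrimitive.of_ne_one fun h => Algebra.trace_ne_zero (ZMod p) F ?_
  ext x
  have hx : ZMod.stdAddChar (Algebra.trace (ZMod p) F x) = ZMod.stdAddChar (0 : ZMod p) := by
    simpa [canAddChar] using DFunLike.congr_fun h x
  exact ZMod.injective_stdAddChar hx

variable {p F}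

lemma canChar_eq_canAddChar_trace [Fact p.Prime] [Fintype F] {L : Type*} [Field L] [Fintype L]
    [Algebra (ZMod p) L] [Algebra F L] [IsScalarTower (ZMod p) F L] (x : L) :
    canChar p L x = canAddChar p F (Algebra.trace F L x) := by
  rw [canChar_eq_canAddChar, canAddChar, canAddChar, AddChar.compAddMonoidHom_apply,
    AddChar.compAddMonoidHom_apply, LinearMap.toAddMonoidHom_coe, LinearMap.toAddMonoidHom_coe,
    Algebra.trace_trace]

end CanonicalCharacter

lemma exists_isPrimitive_canChar_eq_trace (p : ℕ) [Fact p.Prime] (K L : Type*) [Field K]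
    [Fintype K] [Field L] [Fintype L] [Algebra (ZMod p) L] [Algebra K L] :
    ∃ ψ : AddChar K ℂ, ψ.IsPrimitive ∧
      ∀ x : L, canChar p L x = ψ (Algebra.trace K L x) := by
  have : CharP L p := charP_of_injective_algebraMap (algebraMap (ZMod p) L).injective p
  have : CharP K p := (algebraMap K L).charP (algebraMap K L).injective p
  let := ZMod.algebra K p
  exact ⟨canAddChar p K, isPrimitive_canAddChar p K, canChar_eq_canAddChar_trace⟩

lemma gaussPeriod_eq_sum_filter (p : ℕ) (F : Type*) [Field F] [Fintype F]
    [Algebra (ZMod p) F] (α : F) (N i : ℕ) :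
    gaussPeriod p F α N i =
      ∑ x ∈ univ.filter (fun x => ∃ k : ℕ, x = α ^ i * (α ^ N) ^ k), canChar p F x :=
  (sum_filter _ _).symm

lemma hammingNorm_cword_zero (Kq E1 E : Type*) [Field Kq] [DecidableEq Kq] [Field E1]
    [Fintype E1] [Field E] [Algebra Kq E1] [Algebra Kq E] [Algebra E1 E]
    (ω : E) (h n : ℕ) (b : E) :
    hammingNorm (cword Kq E1 E ω h n 0 b) = Fintype.card E1 *
      (Nat.count (fun j => Algebra.trace Kq E (b * (ω ^ h) ^ j) ≠ 0) n * 2) := by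
  have hcw (z : E1 × Fin n × Bool) :
      cword Kq E1 E ω h n 0 b z = Algebra.trace Kq E (b * (ω ^ h) ^ (z.2.1 : ℕ)) := by
    rcases z with ⟨x, j, _ | _⟩ <;> simp [cword, pow_mul]
  rw [hammingNorm, Nat.count_eq_card_filter_fin]
  simp only [hcw]
  rw [← univ_product_univ, filter_product_right (fun y : Fin n × Bool =>
      Algebra.trace Kq E (b * (ω ^ h) ^ (y.1 : ℕ)) ≠ 0), card_product, ← univ_product_univ,
    filter_product_left (fun j : Fin n => Algebra.trace Kq E (b * (ω ^ h) ^ (j : ℕ)) ≠ 0),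
    card_product, card_univ, card_univ, Fintype.card_bool]

lemma cast_pow_mul_two_eq_of_mul_eq {q m m1 h e n W : ℕ} {η : ℂ} (hm1 : m1 ≠ 0)
    (hq : 1 ≤ q) (hM : h * (e * (q - 1)) = q ^ m - 1) (hQ : q ^ m - 1 ≠ 0) (hn : e ∣ n)
    (hW : (q : ℂ) * W = (n / e : ℕ) * (e * (q - 1) - η)) :
    ((q ^ m1 * (W * 2) : ℕ) : ℂ) =
      2 * n * (q : ℂ) ^ (m1 - 1) * (q - 1) / (q ^ m - 1) * (q ^ m - 1 - h * η) := by
  have hMc : (h : ℂ) * (e * (q - 1)) = q ^ m - 1 := by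
    have := congrArg (Nat.cast : ℕ → ℂ) hM
    push_cast [Nat.cast_sub hq, Nat.cast_sub (Nat.one_le_iff_ne_zero.mpr (by omega : q ^ m ≠ 0))]
      at this
    exact this
  have hQc : (q : ℂ) ^ m - 1 ≠ 0 := by
    have : ((h * (e * (q - 1)) : ℕ) : ℂ) ≠ 0 := by exact_mod_cast hM ▸ hQ
    push_cast [Nat.cast_sub hq] at this
    rwa [← hMc]
  have hnc : (n : ℂ) = (n / e : ℕ) * e := by exact_mod_cast (Nat.div_mul_cancel hn).symm
  have hpow : (q : ℂ) ^ m1 = q ^ (m1 - 1) * q := by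
    rw [← pow_succ, Nat.sub_add_cancel (Nat.pos_of_ne_zero hm1)]
  push_cast
  rw [div_mul_eq_mul_div, eq_div_iff hQc, hpow, hnc, ← hMc]
  linear_combination (2 * (q : ℂ) ^ (m1 - 1) * h * e * (q - 1)) * hW

theorem stmt8_general (p sp q m m1 h n : ℕ) (hp : p.Prime) (hpodd : Odd p)
    (Kq E1 E : Type*)
    [Field Kq] [Fintype Kq] [DecidableEq Kq]
    [Field E1] [Fintype E1] [Field E] [Fintype E] [Algebra (ZMod p) E]
    [Algebra Kq E1] [Algebra Kq E] [Algebra E1 E]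
    (hq : q = Fintype.card Kq) (hqp : q = p ^ sp) (hsp : 0 < sp)
    (hc1 : Fintype.card E1 = q ^ m1) (hc : Fintype.card E = q ^ m)
    (ω : E) (hω : ∀ x : E, x ≠ 0 → ∃ k : ℕ, x = ω ^ k)
    (hh : h ∣ (q ^ m - 1) / (q - 1))
    (hn : (q ^ m - 1) / (h * (q - 1)) ∣ n) :
    ∀ i : ℕ, i < h → ∀ b : E, (∃ k : ℕ, b = ω ^ i * (ω ^ h) ^ k) →
      (hammingNorm (cword Kq E1 E ω h n 0 b) : ℂ) =
        (2 * n * (q : ℂ) ^ (m1 - 1) * ((q : ℂ) - 1)) / ((q : ℂ) ^ m - 1) *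
          ((q : ℂ) ^ m - 1 - (h : ℂ) * gaussPeriod p E ω h i) := by
  rintro i - b ⟨k₀, rfl⟩
  subst hq
  have : Fact p.Prime := ⟨hp⟩
  obtain ⟨ψ, hψ, hcan⟩ := exists_isPrimitive_canChar_eq_trace p Kq E
  have hq3 : 3 ≤ Fintype.card Kq := by
    have := hp.two_le
    have := Nat.odd_iff.mp hpodd
    exact hqp ▸ (show 3 ≤ p by omega).trans (Nat.le_self_pow hsp.ne' p)
  have hm : m ≠ 0 := by
    rintro rfl
    simpa [hc] using Fintype.one_lt_card (α := E)
  have hm1 : m1 ≠ 0 := by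
    rintro rfl
    simpa [hc1] using Fintype.one_lt_card (α := E1)
  have hprim := isPrimitiveRoot_card_sub_one_of_forall_eq_pow
    (hc ▸ hq3.trans (Nat.le_self_pow hm _)) hω
  rw [hc] at hprim
  have hM := Nat.mul_div_mul_mul_eq (by simpa using Nat.sub_dvd_pow_sub_pow _ 1 m) hh
  have hQ : Fintype.card Kq ^ m - 1 ≠ 0 := (Nat.sub_pos_of_lt (Nat.one_lt_pow hm (by omega))).ne'
  have he : (Fintype.card Kq ^ m - 1) / (h * (Fintype.card Kq - 1)) ≠ 0 :=
    fun he => hQ (by rw [← hM, he]; simp)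
  have hW := card_mul_count_trace_ne_zero hψ (hprim.pow (Nat.pos_of_ne_zero hQ) hM.symm) he
    (pow_ne_zero i (hprim.ne_zero hQ)) k₀ hn
  rw [hammingNorm_cword_zero, gaussPeriod_eq_sum_filter, hc1]
  simp_rw [hcan]
  exact cast_pow_mul_two_eq_of_mul_eq hm1 (by omega) hM hQ hn hW

/-- For `a = 0` and `b ∈ C_i^{(h,q^m)}`, the codeword `c(0,b)` has Hamming weight
`(2nq^{m_1−1}(q−1)/(q^m−1))·(q^m − 1 − h·η_i^{(h,q^m)})`. -/
theorem stmt8 (p sp q m m1 h n : ℕ) (hp : p.Prime) (hpodd : Odd p)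
    (Kq E1 E : Type*)
    [Field Kq] [Fintype Kq] [DecidableEq Kq]
    [Field E1] [Fintype E1] [Field E] [Fintype E] [Algebra (ZMod p) E]
    [Algebra Kq E1] [Algebra Kq E] [Algebra E1 E] [IsScalarTower Kq E1 E]
    (hq : q = Fintype.card Kq) (hqp : q = p ^ sp) (hsp : 0 < sp)
    (hm1 : m1 ∣ m) (hc1 : Fintype.card E1 = q ^ m1) (hc : Fintype.card E = q ^ m)
    (ω : E) (hω : ∀ x : E, x ≠ 0 → ∃ k : ℕ, x = ω ^ k)
    (hh0 : 0 < h) (hh : h ∣ (q ^ m - 1) / (q - 1))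
    (hn0 : 0 < n) (hn : (q ^ m - 1) / (h * (q - 1)) ∣ n) :
    ∀ i : ℕ, i < h → ∀ b : E, (∃ k : ℕ, b = ω ^ i * (ω ^ h) ^ k) →
      (hammingNorm (cword Kq E1 E ω h n 0 b) : ℂ) =
        (2 * n * (q : ℂ) ^ (m1 - 1) * ((q : ℂ) - 1)) / ((q : ℂ) ^ m - 1) *
          ((q : ℂ) ^ m - 1 - (h : ℂ) * gaussPeriod p E ω h i) :=
  stmt8_general p sp q m m1 h n hp hpodd Kq E1 E hq hqp hsp hc1 hc ω hω hh hn
end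

section
/- If h = 1, then C_K is a two-weight linear code with parameters [2nq^{m_1}, m+m_1, 2nq^{m_1−1}(q−1)]: the nonzero weight 2nq^{m_1−1}(q−1) occurs with frequency q^{m_1+m} − q^m and the weight 2nq^{m_1+m−1}(q−1)/(q^m−1) occurs with frequency q^m − 1. -/
/-!
For `a ≠ 0`, each of the `2n` columns `x ↦ Tr(a x) + c` of `c(a, b)` is a nonconstant affine form
on `E1`, so it is nonzero at exactly `q^(m1-1) (q-1)` points. For `a = 0` the codeword depends only
on `i`, through `Tr(b ω^i)`. With `N = (q^m-1)/(q-1)` the power `ω^N` lies in `Kq^*`, so the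
condition `Tr(b ω^i) ≠ 0` is `N`-periodic in `i`; on the full cycle `i < (q-1) N = q^m - 1` the
powers `ω^i` run through `E^*`, where the condition holds `q^(m-1) (q-1)` times, hence it holds
`q^(m-1)` times per period. The two weights are positive and distinct, which gives injectivity and
the frequencies.
-/

open scoped Classical

open Finset

theorem Nat.count_mul_of_periodic {p : ℕ → Prop} [DecidablePred p] {N : ℕ}
    (hp : Function.Periodic p N) (t : ℕ) : Nat.count p (t * N) = t * Nat.count p N := by
  induction t with
  | zero => simp
  | succ t ih =>
    have hshift (k : ℕ) : p (t * N + k) ↔ p k := by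
      rw [add_comm]; exact iff_of_eq (hp.nat_mul t k)
    simp only [add_mul, one_mul, Nat.count_add, ih, hshift]

section HammingNorm

variable {α β γ : Type*} [Fintype α] [Fintype β] [Zero γ] [DecidableEq γ]

theorem hammingNorm_prod_eq_sum (f : α × β → γ) :
    hammingNorm f = ∑ b, hammingNorm fun a => f (a, b) := by
  simp only [hammingNorm, card_filter]
  rw [Fintype.sum_prod_type, Finset.sum_comm]

theorem hammingNorm_comp_snd (f : β → γ) :
    hammingNorm (fun z : α × β => f z.2) = Fintype.card α * hammingNorm f := by
  rw [hammingNorm, hammingNorm, ← card_univ, ← card_product]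
  congr 1; ext; simp

theorem hammingNorm_comp_fst (f : α → γ) :
    hammingNorm (fun z : α × β => f z.1) = Fintype.card β * hammingNorm f := by
  rw [hammingNorm, hammingNorm, ← card_univ, mul_comm, ← card_product]
  congr 1; ext; simp

theorem hammingNorm_fin_eq_count {n : ℕ} (f : ℕ → γ) :
    hammingNorm (fun i : Fin n => f i) = Nat.count (fun i => f i ≠ 0) n := by
  rw [Nat.count_eq_card_filter_range, hammingNorm, card_filter, card_filter,
    Fin.sum_univ_eq_sum_range (fun i => if f i ≠ 0 then 1 else 0)]

end HammingNorm

section FiniteField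

variable {K F : Type*} [Field K] [Fintype K] [Field F] [Algebra K F]

theorem card_filter_trace_mul_eq_mul_card [Fintype F] [DecidableEq K] {a : F} (ha : a ≠ 0) (c : K) :
    #{x | Algebra.trace K F (a * x) = c} * Fintype.card K = Fintype.card F := by
  let f : F →+ K := (Algebra.trace K F).toAddMonoidHom.comp (AddMonoidHom.mulLeft a)
  have hsurj : Function.Surjective f := fun d => by
    obtain ⟨y, rfl⟩ := Algebra.trace_surjective K F d
    exact ⟨a⁻¹ * y, by simp [f, ha]⟩
  calc #{x | f x = c} * Fintype.card K
      = ∑ d : K, #{x | f x = d} := by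
        rw [sum_congr rfl fun d _ => AddMonoidHom.card_fiber_eq_of_mem_range f (hsurj d) (hsurj c),
          sum_const, card_univ, smul_eq_mul, mul_comm]
    _ = Fintype.card F := (card_eq_sum_card_fiberwise fun x _ => mem_univ (f x)).symm

theorem hammingNorm_trace_mul_add [Fintype F] [DecidableEq K] {q d : ℕ} (hK : Fintype.card K = q)
    (hF : Fintype.card F = q ^ d) {a : F} (ha : a ≠ 0) (c : K) :
    hammingNorm (fun x => Algebra.trace K F (a * x) + c) = q ^ (d - 1) * (q - 1) := by
  have hd : d ≠ 0 := by
    rintro rfl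
    simpa [hF] using Fintype.one_lt_card (α := F)
  have hpow : q ^ d = q ^ (d - 1) * q := by rw [← pow_succ, Nat.sub_add_cancel (by omega)]
  have hzeros : #{x | Algebra.trace K F (a * x) + c = 0} = q ^ (d - 1) := by
    have h := card_filter_trace_mul_eq_mul_card ha (-c)
    rw [hK, hF, hpow] at h
    simp_rw [add_eq_zero_iff_eq_neg]
    exact Nat.eq_of_mul_eq_mul_right (by rw [← hK]; exact Fintype.card_pos) h
  have htotal := card_filter_add_card_filter_not (s := univ)
    (p := fun x => Algebra.trace K F (a * x) + c = 0)
  rw [hzeros, card_univ, hF] at htotal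
  rw [Nat.mul_sub_one, ← hpow, ← htotal, Nat.add_sub_cancel_left]
  rfl

theorem mem_range_algebraMap_of_pow_card_sub_one_eq_one {y : F}
    (hy : y ^ (Fintype.card K - 1) = 1) : y ∈ Set.range (algebraMap K F) := by
  obtain ⟨g, hg⟩ := IsCyclic.exists_ofOrder_eq_natCard (α := Kˣ)
  rw [Nat.card_eq_fintype_card, Fintype.card_units, ← orderOf_units] at hg
  have hζ := (hg ▸ IsPrimitiveRoot.orderOf (g : K)).map_of_injective (algebraMap K F).injective
  have : NeZero (Fintype.card K - 1) := ⟨by have := Fintype.one_lt_card (α := K); omega⟩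
  obtain ⟨i, -, hi⟩ := hζ.eq_pow_of_pow_eq_one hy
  exact ⟨(g : K) ^ i, by rw [map_pow, hi]⟩

end FiniteField

section PrimitiveElement

variable {E : Type*} [Field E] [Fintype E]

theorem isPrimitiveRoot_of_forall_eq_pow (hE : 2 < Fintype.card E) {ω : E}
    (hω : ∀ x : E, x ≠ 0 → ∃ k : ℕ, x = ω ^ k) : IsPrimitiveRoot ω (Fintype.card E - 1) := by
  have hω0 : ω ≠ 0 := by
    rintro rfl
    obtain ⟨x, -, hx⟩ := exists_mem_notMem_of_card_lt_card (s := ({0, 1} : Finset E)) (t := univ)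
      (by rw [card_univ]; exact card_le_two.trans_lt hE)
    obtain ⟨k, rfl⟩ := hω x fun h => hx (by simp [h])
    rcases k.eq_zero_or_pos with rfl | hk
    · simp at hx
    · simp [zero_pow hk.ne'] at hx
  let u := Units.mk0 ω hω0
  have hgen : ∀ x : Eˣ, x ∈ Subgroup.zpowers u := fun x => by
    obtain ⟨k, hk⟩ := hω x x.ne_zero
    exact ⟨k, Units.ext (by simp [u, hk])⟩
  have hord := orderOf_eq_card_of_forall_mem_zpowers hgen
  rw [Nat.card_eq_fintype_card, Fintype.card_units] at hord
  rw [← hord, ← orderOf_units]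
  exact IsPrimitiveRoot.orderOf _

theorem count_pow_eq_card_filter {ω : E} (hω : IsPrimitiveRoot ω (Fintype.card E - 1))
    (P : E → Prop) [DecidablePred P] (hP : ¬ P 0) :
    Nat.count (fun i => P (ω ^ i)) (Fintype.card E - 1) = #{y | P y} := by
  have : NeZero (Fintype.card E - 1) := ⟨by have := Fintype.one_lt_card (α := E); omega⟩
  rw [Nat.count_eq_card_filter_range]
  refine card_nbij (ω ^ ·) (fun i hi => by simpa using (mem_filter.1 hi).2) ?_ ?_
  · intro i hi j hj hij
    simp only [coe_filter, mem_range, Set.mem_ofPred_eq] at hi hj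
    exact hω.pow_inj hi.1 hj.1 hij
  · intro y hy
    simp only [coe_filter, mem_univ, true_and, Set.mem_ofPred_eq] at hy
    have hy0 : y ≠ 0 := by rintro rfl; exact hP hy
    obtain ⟨i, hi, rfl⟩ := hω.eq_pow_of_pow_eq_one (FiniteField.pow_card_sub_one_eq_one y hy0)
    exact ⟨i, by simpa using ⟨hi, hy⟩, rfl⟩

end PrimitiveElement

theorem count_trace_mul_pow_ne_zero {K E : Type*} [Field K] [Fintype K] [DecidableEq K]
    [Field E] [Fintype E] [Algebra K E] {q m : ℕ} (hK : Fintype.card K = q)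
    (hE : Fintype.card E = q ^ m) {ω : E} (hω : IsPrimitiveRoot ω (q ^ m - 1)) {b : E}
    (hb : b ≠ 0) (t : ℕ) :
    Nat.count (fun i => Algebra.trace K E (b * ω ^ i) ≠ 0) (t * ((q ^ m - 1) / (q - 1))) =
      t * q ^ (m - 1) := by
  set N := (q ^ m - 1) / (q - 1)
  have hq : 1 < q := hK ▸ Fintype.one_lt_card
  have hN : (q - 1) * N = q ^ m - 1 := Nat.mul_div_cancel' (Nat.sub_one_dvd_pow_sub_one q m)
  obtain ⟨lam, hlam⟩ := mem_range_algebraMap_of_pow_card_sub_one_eq_one (K := K) (y := ω ^ N)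
    (by rw [hK, ← pow_mul, mul_comm, hN, hω.pow_eq_one])
  have hlam0 : lam ≠ 0 := by
    rintro rfl
    have : NeZero (q ^ m - 1) := ⟨by rw [← hE]; have := Fintype.one_lt_card (α := E); omega⟩
    exact pow_ne_zero N (hω.ne_zero (NeZero.ne _)) (by simpa using hlam.symm)
  have hper : Function.Periodic (fun i => Algebra.trace K E (b * ω ^ i) ≠ 0) N := fun i => by
    have : b * ω ^ (i + N) = lam • (b * ω ^ i) := by rw [Algebra.smul_def, hlam, pow_add]; ring
    simp only [this, map_smul, smul_eq_mul, ne_eq, mul_eq_zero, hlam0, false_or]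
  have hcycle : Nat.count (fun i => Algebra.trace K E (b * ω ^ i) ≠ 0) (q ^ m - 1) =
      q ^ (m - 1) * (q - 1) := by
    rw [← hE, count_pow_eq_card_filter (hE ▸ hω) (fun y => Algebra.trace K E (b * y) ≠ 0) (by simp)]
    simpa [hammingNorm] using hammingNorm_trace_mul_add hK hE hb 0
  rw [← hN, Nat.count_mul_of_periodic hper, mul_comm] at hcycle
  rw [Nat.count_mul_of_periodic hper, Nat.eq_of_mul_eq_mul_right (by omega) hcycle]

section Code

variable (Kq E1 E : Type*) [Field Kq] [Field E1] [Field E] [Algebra Kq E1] [Algebra Kq E]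
  [Algebra E1 E]

noncomputable def cwordHom (ω : E) (h n : ℕ) : E1 × E →+ (E1 × Fin n × Bool → Kq) where
  toFun ab := cword Kq E1 E ω h n ab.1 ab.2
  map_zero' := by
    funext z
    rcases z with ⟨x, i, _ | _⟩ <;> simp [cword]
  map_add' ab ab' := by
    funext z
    rcases z with ⟨x, i, _ | _⟩ <;>
      simp only [cword, Bool.false_eq_true, ↓reduceIte, Pi.add_apply, Prod.fst_add, Prod.snd_add,
        map_add, add_mul] <;> ring

variable {Kq E1 E} [DecidableEq Kq] [Fintype E1]

theorem hammingNorm_cword_of_ne_zero [Fintype Kq] {q m1 : ℕ} (hK : Fintype.card Kq = q)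
    (hE1 : Fintype.card E1 = q ^ m1) (ω : E) (h n : ℕ) {a : E1} (ha : a ≠ 0) (b : E) :
    hammingNorm (cword Kq E1 E ω h n a b) = 2 * n * q ^ (m1 - 1) * (q - 1) := by
  have hcol : ∀ y, hammingNorm (fun x => cword Kq E1 E ω h n a b (x, y)) =
      q ^ (m1 - 1) * (q - 1) := by
    rintro ⟨i, _ | _⟩ <;> simp only [cword, Bool.false_eq_true, ↓reduceIte] <;>
      exact hammingNorm_trace_mul_add hK hE1 ha _
  rw [hammingNorm_prod_eq_sum]
  simp only [hcol, sum_const, card_univ, Fintype.card_prod, Fintype.card_fin, Fintype.card_bool,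
    smul_eq_mul]
  ring

theorem hammingNorm_cword_zero_left (ω : E) (h n : ℕ) (b : E) :
    hammingNorm (cword Kq E1 E ω h n 0 b) =
      2 * Fintype.card E1 * Nat.count (fun i => Algebra.trace Kq E (b * ω ^ (h * i)) ≠ 0) n := by
  let g : Fin n → Kq := fun i => Algebra.trace Kq E (b * ω ^ (h * (i : ℕ)))
  have hg : cword Kq E1 E ω h n 0 b = fun z => g z.2.1 := by
    funext z
    rcases z with ⟨x, i, _ | _⟩ <;> simp [cword, g]
  rw [hg, hammingNorm_comp_snd (fun y : Fin n × Bool => g y.1), hammingNorm_comp_fst,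
    hammingNorm_fin_eq_count (fun i => Algebra.trace Kq E (b * ω ^ (h * i)))]
  simp only [Fintype.card_bool]
  ring

theorem hammingNorm_cword_zero_left_of_isPrimitiveRoot [Fintype Kq] [Fintype E] {q m m1 : ℕ}
    (hK : Fintype.card Kq = q) (hE1 : Fintype.card E1 = q ^ m1) (hE : Fintype.card E = q ^ m)
    {ω : E} (hω : IsPrimitiveRoot ω (q ^ m - 1)) (t : ℕ) {b : E} (hb : b ≠ 0) :
    hammingNorm (cword Kq E1 E ω 1 ((q ^ m - 1) / (q - 1) * t) 0 b) = 2 * t * q ^ (m1 + m - 1) := by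
  have hm : m ≠ 0 := by rintro rfl; simpa [hE] using Fintype.one_lt_card (α := E)
  simp only [hammingNorm_cword_zero_left, one_mul, mul_comm _ t,
    count_trace_mul_pow_ne_zero hK hE hω hb, hE1]
  rw [show m1 + m - 1 = m1 + (m - 1) by omega, pow_add]
  ring

end Code

section WeightClasses

variable {A B : Type*} [Zero A] [Zero B] {w : A × B → ℕ} {w₁ w₂ : ℕ}

theorem le_apply_of_ne_zero (h₁ : ∀ a b, a ≠ 0 → w (a, b) = w₁)
    (h₂ : ∀ b, b ≠ 0 → w (0, b) = w₂) (hw : w₁ ≤ w₂) (p : A × B) (hp : p ≠ 0) : w₁ ≤ w p := by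
  obtain ⟨a, b⟩ := p
  rcases eq_or_ne a 0 with rfl | ha
  · rw [h₂ b fun hb => hp (by rw [hb]; rfl)]
    exact hw
  · rw [h₁ a b ha]

theorem card_filter_eq_of_fst_ne_zero [Fintype A] [Fintype B] (h₁ : ∀ a b, a ≠ 0 → w (a, b) = w₁)
    (h₂ : ∀ b, b ≠ 0 → w (0, b) = w₂) (h₀ : w (0, 0) = 0) (hw₁ : w₁ ≠ 0) (hw : w₁ ≠ w₂) :
    #{p | w p = w₁} = (Fintype.card A - 1) * Fintype.card B := by
  have hset : ({p | w p = w₁} : Finset (A × B)) = univ.erase 0 ×ˢ univ := by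
    ext ⟨a, b⟩
    rcases eq_or_ne a 0 with rfl | ha
    · rcases eq_or_ne b 0 with rfl | hb
      · simp [h₀, hw₁.symm]
      · simp [h₂ b hb, hw.symm]
    · simp [h₁ a b ha, ha]
  rw [hset, card_product, card_erase_of_mem (mem_univ _), card_univ, card_univ]

theorem card_filter_eq_of_fst_eq_zero [Fintype A] [Fintype B] (h₁ : ∀ a b, a ≠ 0 → w (a, b) = w₁)
    (h₂ : ∀ b, b ≠ 0 → w (0, b) = w₂) (h₀ : w (0, 0) = 0) (hw₂ : w₂ ≠ 0) (hw : w₁ ≠ w₂) :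
    #{p | w p = w₂} = Fintype.card B - 1 := by
  have hset : ({p | w p = w₂} : Finset (A × B)) = {0} ×ˢ univ.erase 0 := by
    ext ⟨a, b⟩
    rcases eq_or_ne a 0 with rfl | ha
    · rcases eq_or_ne b 0 with rfl | hb
      · simp [h₀, hw₂.symm]
      · simp [h₂ b hb, hb]
    · simp [h₁ a b ha, Ne.symm ha, hw]
  rw [hset, card_product, card_singleton, card_erase_of_mem (mem_univ _), card_univ, one_mul]

end WeightClasses

theorem injective_of_hammingNorm_pos {G ι K : Type*} [AddGroup G] [Fintype ι] [AddMonoid K]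
    [DecidableEq K] (f : G →+ (ι → K)) (hf : ∀ g, g ≠ 0 → 0 < hammingNorm (f g)) :
    Function.Injective f :=
  (injective_iff_map_eq_zero f).2 fun g hg =>
    by_contra fun hne => (hf g hne).ne' (hammingNorm_eq_zero.2 hg)

theorem mul_pow_mul_sub_one_lt {q m k n t : ℕ} (hq : 1 < q) (hk : k ≠ 0) (ht : t ≠ 0)
    (hnt : n * (q - 1) = t * (q ^ m - 1)) : n * q ^ (k - 1) * (q - 1) < t * q ^ (k + m - 1) :=
  calc n * q ^ (k - 1) * (q - 1)
      = q ^ (k - 1) * t * (q ^ m - 1) := by rw [mul_right_comm, hnt]; ring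
    _ < q ^ (k - 1) * t * q ^ m :=
      Nat.mul_lt_mul_of_pos_left (Nat.sub_one_lt (by positivity)) (by positivity)
    _ = t * q ^ (k + m - 1) := by rw [show k + m - 1 = k - 1 + m by omega, pow_add]; ring

theorem cast_mul_sub_one_div_eq {q m n t : ℕ} (hq : 1 < q) (hm : m ≠ 0)
    (hnt : n * (q - 1) = t * (q ^ m - 1)) : (n : ℚ) * (q - 1) / (q ^ m - 1) = t := by
  have hqm : 1 < q ^ m := Nat.one_lt_pow hm hq
  have h := congrArg (Nat.cast : ℕ → ℚ) hnt
  push_cast [Nat.cast_sub hq.le, Nat.cast_sub hqm.le] at h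
  rw [div_eq_iff (sub_ne_zero.2 (by exact_mod_cast hqm.ne')), h]

theorem stmt10_general (q m m1 n : ℕ) (Kq E1 E : Type*)
    [Field Kq] [Fintype Kq] [DecidableEq Kq]
    [Field E1] [Fintype E1] [Field E] [Fintype E]
    [Algebra Kq E1] [Algebra Kq E] [Algebra E1 E]
    (hq : q = Fintype.card Kq) (hqodd : Odd q)
    (hc1 : Fintype.card E1 = q ^ m1) (hc : Fintype.card E = q ^ m)
    (ω : E) (hω : ∀ x : E, x ≠ 0 → ∃ k : ℕ, x = ω ^ k)
    (hn0 : 0 < n) (hn : (q ^ m - 1) / (q - 1) ∣ n) :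
    Fintype.card (E1 × Fin n × Bool) = 2 * n * q ^ m1 ∧
    Function.Injective (fun ab : E1 × E => cword Kq E1 E ω 1 n ab.1 ab.2) ∧
    (∀ a : E1, ∀ b : E, (a, b) ≠ (0, 0) →
      2 * n * q ^ (m1 - 1) * (q - 1) ≤ hammingNorm (cword Kq E1 E ω 1 n a b)) ∧
    (Finset.univ.filter fun ab : E1 × E =>
        hammingNorm (cword Kq E1 E ω 1 n ab.1 ab.2) =
          2 * n * q ^ (m1 - 1) * (q - 1)).card = q ^ (m1 + m) - q ^ m ∧
    (Finset.univ.filter fun ab : E1 × E =>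
        (hammingNorm (cword Kq E1 E ω 1 n ab.1 ab.2) : ℚ) =
          2 * n * (q : ℚ) ^ (m1 + m - 1) * ((q : ℚ) - 1) / ((q : ℚ) ^ m - 1)).card =
      q ^ m - 1 := by
  obtain ⟨t, rfl⟩ := hn
  have hq3 : 3 ≤ q := by
    obtain ⟨k, rfl⟩ := hqodd
    have : 1 < 2 * k + 1 := hq ▸ Fintype.one_lt_card
    omega
  have hm : m ≠ 0 := by rintro rfl; simpa [hc] using Fintype.one_lt_card (α := E)
  have hm1 : m1 ≠ 0 := by rintro rfl; simpa [hc1] using Fintype.one_lt_card (α := E1)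
  have hnt : (q ^ m - 1) / (q - 1) * t * (q - 1) = t * (q ^ m - 1) := by
    rw [mul_right_comm, Nat.div_mul_cancel (Nat.sub_one_dvd_pow_sub_one q m), mul_comm]
  have hprim : IsPrimitiveRoot ω (q ^ m - 1) := hc ▸ isPrimitiveRoot_of_forall_eq_pow
    (hc ▸ lt_of_lt_of_le (by omega) (Nat.le_self_pow hm q)) hω
  set n := (q ^ m - 1) / (q - 1) * t
  set w : E1 × E → ℕ := fun ab => hammingNorm (cword Kq E1 E ω 1 n ab.1 ab.2)
  have hW₁ (a : E1) (b : E) (ha : a ≠ 0) : w (a, b) = 2 * n * q ^ (m1 - 1) * (q - 1) :=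
    hammingNorm_cword_of_ne_zero hq.symm hc1 ω 1 n ha b
  have hW₂ (b : E) (hb : b ≠ 0) : w (0, b) = 2 * t * q ^ (m1 + m - 1) :=
    hammingNorm_cword_zero_left_of_isPrimitiveRoot hq.symm hc1 hc hprim t hb
  have hW₀ : w (0, 0) = 0 := hammingNorm_eq_zero.2 (map_zero (cwordHom Kq E1 E ω 1 n))
  have hw₁ : 0 < 2 * n * q ^ (m1 - 1) * (q - 1) := by
    have : 0 < q - 1 := by omega
    positivity
  have hw : 2 * n * q ^ (m1 - 1) * (q - 1) < 2 * t * q ^ (m1 + m - 1) := by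
    simpa only [mul_assoc, Nat.mul_lt_mul_left two_pos] using
      mul_pow_mul_sub_one_lt (by omega) hm1 (by rintro rfl; omega) hnt
  have hmin := le_apply_of_ne_zero hW₁ hW₂ hw.le
  have hcast : 2 * n * (q : ℚ) ^ (m1 + m - 1) * ((q : ℚ) - 1) / ((q : ℚ) ^ m - 1) =
      (2 * t * q ^ (m1 + m - 1) : ℕ) := by
    push_cast
    rw [← cast_mul_sub_one_div_eq (by omega) hm hnt]
    ring
  refine ⟨by simp [hc1]; ring, ?_, fun a b => hmin (a, b), ?_, ?_⟩
  · exact injective_of_hammingNorm_pos (cwordHom Kq E1 E ω 1 n) fun p hp =>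
      hw₁.trans_le (hmin p hp)
  · rw [card_filter_eq_of_fst_ne_zero hW₁ hW₂ hW₀ hw₁.ne' hw.ne, hc1, hc, Nat.sub_one_mul,
      pow_add]
  · simp only [hcast, Nat.cast_inj]
    rw [card_filter_eq_of_fst_eq_zero hW₁ hW₂ hW₀ (hw₁.trans hw).ne' hw.ne, hc]

/-- If `h = 1`, `C_K` is a `[2nq^{m_1}, m+m_1, 2nq^{m_1−1}(q−1)]` two-weight linear
code: the weight `2nq^{m_1−1}(q−1)` occurs with frequency `q^{m_1+m} − q^m` and the
weight `2nq^{m_1+m−1}(q−1)/(q^m−1)` with frequency `q^m − 1`. -/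
theorem stmt10 (q m m1 n : ℕ) (Kq E1 E : Type*)
    [Field Kq] [Fintype Kq] [DecidableEq Kq]
    [Field E1] [Fintype E1] [Field E] [Fintype E]
    [Algebra Kq E1] [Algebra Kq E] [Algebra E1 E] [IsScalarTower Kq E1 E]
    (hq : q = Fintype.card Kq) (hqodd : Odd q)
    (hm1 : m1 ∣ m) (hc1 : Fintype.card E1 = q ^ m1) (hc : Fintype.card E = q ^ m)
    (ω : E) (hω : ∀ x : E, x ≠ 0 → ∃ k : ℕ, x = ω ^ k)
    (hn0 : 0 < n) (hn : (q ^ m - 1) / (q - 1) ∣ n) :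
    Fintype.card (E1 × Fin n × Bool) = 2 * n * q ^ m1 ∧
    Function.Injective (fun ab : E1 × E => cword Kq E1 E ω 1 n ab.1 ab.2) ∧
    (∀ a : E1, ∀ b : E, (a, b) ≠ (0, 0) →
      2 * n * q ^ (m1 - 1) * (q - 1) ≤ hammingNorm (cword Kq E1 E ω 1 n a b)) ∧
    (Finset.univ.filter fun ab : E1 × E =>
        hammingNorm (cword Kq E1 E ω 1 n ab.1 ab.2) =
          2 * n * q ^ (m1 - 1) * (q - 1)).card = q ^ (m1 + m) - q ^ m ∧
    (Finset.univ.filter fun ab : E1 × E =>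
        (hammingNorm (cword Kq E1 E ω 1 n ab.1 ab.2) : ℚ) =
          2 * n * (q : ℚ) ^ (m1 + m - 1) * ((q : ℚ) - 1) / ((q : ℚ) ^ m - 1)).card =
      q ^ m - 1 :=
  stmt10_general q m m1 n Kq E1 E hq hqodd hc1 hc ω hω hn0 hn
end
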